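/- arXiv:1812.01317 — 4 statements merged into one kernel-verified Lean document; each statement's English description precedes it below -/
import Mathlib

section
/- Let ((M_n)_{n<ω}, η, (μ^{nk})) be a depth-1 graded monad on Set, let G be a Set-endofunctor and α: G → M₁ a natural transformation (a graded semantics). Suppose a graded logic for this data (with truth-value M₀-algebra (Ω,o), truth constants Θ, propositional operators 𝒪 and modalities Λ) is both depth-0 separating and depth-1 separating. Then the logic is expressive: for every n, the evaluation maps ⟦φ⟧: M_n1 → Ω, where φ ranges over formulas of uniform depth n, are jointly injective; consequently, if two states x of a G-coalgebra (X,γ) and y of a G-coalgebra (Y,δ) are not α-trace equivalent, then there is a formula φ of some uniform depth n with ⟦φ⟧(M_n! (γ^{(n)}(x))) ≠ ⟦φ⟧(M_n! (δ^{(n)}(y))). -/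
/-!
The proof is an induction on the depth. Depth 0 is depth-0 separation. For the step, the
evaluations of depth-`n` formulas form a jointly injective family of `M₀`-homomorphisms
`Mₙ1 → Ω` (by induction) that is closed under the propositional operators; since the
depth-1 property makes `(Mₙ1, M_{n+1}1, μ^{1n})` a canonical `M₁`-algebra, depth-1
separation then says that the evaluations of the formulas `Lφ` are jointly injective on
`M_{n+1}1`.
-/

universe u

/-- A functor on `Set` (i.e. on `Type u`), given by its action on objects and maps. -/
structure SetFunctor : Type (u + 1) where
  obj : Type u → Type u
  map : ∀ {X Y : Type u}, (X → Y) → obj X → obj Y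
  map_id : ∀ X : Type u, map (id : X → X) = id
  map_comp : ∀ {X Y Z : Type u} (f : X → Y) (g : Y → Z), map (g ∘ f) = map g ∘ map f

/-- A (ℕ-)graded monad on `Set`: functors `Mₙ`, a unit `η : Id → M₀` and
multiplications `μ^{nk} : MₙMₖ → M_{n+k}` subject to the unit and associativity laws
of graded monads. -/
structure GradedMonad : Type (u + 1) where
  M : ℕ → SetFunctor.{u}
  unit : ∀ X : Type u, X → (M 0).obj X
  unit_nat : ∀ {X Y : Type u} (f : X → Y), (M 0).map f ∘ unit X = unit Y ∘ f
  mult : ∀ (n k : ℕ) (X : Type u), (M n).obj ((M k).obj X) → (M (n + k)).obj X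
  mult_nat : ∀ (n k : ℕ) {X Y : Type u} (f : X → Y),
      (M (n + k)).map f ∘ mult n k X = mult n k Y ∘ (M n).map ((M k).map f)
  unit_left : ∀ (n : ℕ) (X : Type u),
      cast (congrArg (fun i => (M i).obj X) (Nat.zero_add n)) ∘
          mult 0 n X ∘ unit ((M n).obj X)
        = id
  unit_right : ∀ (n : ℕ) (X : Type u), mult n 0 X ∘ (M n).map (unit X) = id
  assoc : ∀ (n k m : ℕ) (X : Type u),
      mult n (k + m) X ∘ (M n).map (mult k m X)
        = cast (congrArg (fun i => (M i).obj X) (Nat.add_assoc n k m)) ∘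
            mult (n + k) m X ∘ mult n k ((M m).obj X)

namespace GradedMonad

variable (Mo : GradedMonad.{u})

/-- Transport along an equality of grades. -/
def castM {m n : ℕ} (h : m = n) (X : Type u) : (Mo.M m).obj X → (Mo.M n).obj X :=
  cast (congrArg (fun i => (Mo.M i).obj X) h)

/-- The `M₀`-algebra structure `μ^{0n}` on `MₙX`. -/
def mult0 (n : ℕ) (X : Type u) : (Mo.M 0).obj ((Mo.M n).obj X) → (Mo.M n).obj X :=
  Mo.castM (Nat.zero_add n) X ∘ Mo.mult 0 n X

/-- An Eilenberg-Moore algebra for the monad `M₀`. -/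
structure M0Algebra : Type (u + 1) where
  carrier : Type u
  str : (Mo.M 0).obj carrier → carrier
  str_unit : str ∘ Mo.unit carrier = id
  str_mult : str ∘ (Mo.M 0).map str = str ∘ Mo.mult 0 0 carrier

/-- `M₀`-algebra homomorphisms. -/
def IsM0Hom (A B : M0Algebra Mo) (f : A.carrier → B.carrier) : Prop :=
  f ∘ A.str = B.str ∘ (Mo.M 0).map f

/-- An `M₁`-algebra: `M₀`-algebras `A₀`, `A₁` together with a main structure map
`a¹⁰ : M₁A₀ → A₁` satisfying homomorphy and coequalization. -/
structure M1Algebra : Type (u + 1) where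
  A0 : M0Algebra Mo
  A1 : M0Algebra Mo
  a10 : (Mo.M 1).obj A0.carrier → A1.carrier
  homomorphy : a10 ∘ Mo.mult0 1 A0.carrier = A1.str ∘ (Mo.M 0).map a10
  coequalization : a10 ∘ Mo.mult 1 0 A0.carrier = a10 ∘ (Mo.M 1).map A0.str

/-- An `M₁`-algebra is canonical if it is free over its `0`-part w.r.t. the `0`-part
functor: every `M₀`-homomorphism `f : A₀ → B₀` into the `0`-part of an `M₁`-algebra
`B` extends uniquely to an `M₁`-algebra morphism, i.e. there is a unique
`M₀`-homomorphism `g : A₁ → B₁` with `g ∘ a¹⁰ = b¹⁰ ∘ M₁f`. -/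
def M1Algebra.IsCanonical (A : M1Algebra Mo) : Prop :=
  ∀ (B : M1Algebra Mo) (f : A.A0.carrier → B.A0.carrier),
    Mo.IsM0Hom A.A0 B.A0 f →
    ∃! g : A.A1.carrier → B.A1.carrier,
      Mo.IsM0Hom A.A1 B.A1 g ∧ g ∘ A.a10 = B.a10 ∘ (Mo.M 1).map f

/-- A graded monad on `Set` is depth-1 if for every `n` the diagram
`M₁M₀Mₙ ⇉ M₁Mₙ → M_{1+n}` (parallel maps `M₁μ^{0n}` and `μ^{10}Mₙ`, cocone `μ^{1n}`)
is objectwise a coequalizer in the Eilenberg-Moore category of `M₀`-algebras. -/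
def Depth1 : Prop :=
  ∀ (n : ℕ) (X : Type u),
    (Mo.mult 1 n X ∘ (Mo.M 1).map (Mo.mult0 n X)
        = Mo.mult 1 n X ∘ Mo.mult 1 0 ((Mo.M n).obj X)) ∧
    ∀ (D : M0Algebra Mo) (h : (Mo.M 1).obj ((Mo.M n).obj X) → D.carrier),
      (h ∘ Mo.mult0 1 ((Mo.M n).obj X) = D.str ∘ (Mo.M 0).map h) →
      (h ∘ (Mo.M 1).map (Mo.mult0 n X) = h ∘ Mo.mult 1 0 ((Mo.M n).obj X)) →
      ∃! g : (Mo.M (1 + n)).obj X → D.carrier,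
        (g ∘ Mo.mult0 (1 + n) X = D.str ∘ (Mo.M 0).map g) ∧
        g ∘ Mo.mult 1 n X = h

end GradedMonad

namespace GradedMonad

/-- The `α`-pretrace sequence of a `G`-coalgebra `γ : X → GX` w.r.t. the graded
semantics `α : G → M₁` : `γ⁽⁰⁾ = η_X` and `γ⁽ⁿ⁺¹⁾ = μ^{1n}_X ∘ M₁γ⁽ⁿ⁾ ∘ α_X ∘ γ`. -/
def pretrace (Mo : GradedMonad.{u}) (G : SetFunctor.{u})
    (α : ∀ X : Type u, G.obj X → (Mo.M 1).obj X)
    {X : Type u} (γ : X → G.obj X) : (n : ℕ) → X → (Mo.M n).obj X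
  | 0 => Mo.unit X
  | n + 1 =>
      Mo.castM (Nat.add_comm 1 n) X ∘ Mo.mult 1 n X ∘
        (Mo.M 1).map (pretrace Mo G α γ n) ∘ α X ∘ γ

/-- The `α`-trace sequence `Mₙ! ∘ γ⁽ⁿ⁾ : X → Mₙ1`. -/
def traceSeq (Mo : GradedMonad.{u}) (G : SetFunctor.{u})
    (α : ∀ X : Type u, G.obj X → (Mo.M 1).obj X)
    {X : Type u} (γ : X → G.obj X) (n : ℕ) (x : X) : (Mo.M n).obj PUnit.{u + 1} :=
  (Mo.M n).map (fun _ => PUnit.unit) (Mo.pretrace G α γ n x)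

end GradedMonad

/-- Formulas of a graded logic, of uniform depth `n`, over truth constants `Θ`,
propositional operators `O` (with arities `ar`) and modalities `Λ`: formulas of
depth `0` are built from truth constants by propositional operators, and formulas of
depth `n+1` are built by propositional operators from formulas `Lψ` with `L ∈ Λ` and
`ψ` of depth `n`. -/
inductive GFormula (Θ : Type u) (O : Type u) (ar : O → ℕ) (Λ : Type u) : ℕ → Type u
  | const : Θ → GFormula Θ O ar Λ 0
  | prop {n : ℕ} (p : O) : (Fin (ar p) → GFormula Θ O ar Λ n) → GFormula Θ O ar Λ n
  | mod {n : ℕ} : Λ → GFormula Θ O ar Λ n → GFormula Θ O ar Λ (n + 1)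

/-- The evaluation relation of graded logic: `Evaluates … n φ g` states that
`g : Mₙ1 → Ω` is the evaluation map `⟦φ⟧` of the depth-`n` formula `φ`, following
the recursive clauses `⟦c⟧ = o ∘ M₀ĉ`, `⟦p(φ₁,…,φ_k)⟧ = ⟦p⟧ ∘ ⟨⟦φ₁⟧,…,⟦φ_k⟧⟩`, and
`⟦Lφ⟧ = ⟦L⟧(⟦φ⟧)`, the latter being the unique `M₀`-homomorphism `h` with
`h ∘ μ^{1n}_1 = ⟦L⟧ ∘ M₁⟦φ⟧` (by canonicity of `(Mₙ1, M_{n+1}1, μ^{1n})`). -/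
inductive Evaluates (Mo : GradedMonad.{u}) (Ω : GradedMonad.M0Algebra Mo)
    {Θ O Λ : Type u} {ar : O → ℕ}
    (cI : Θ → Ω.carrier)
    (pI : ∀ p : O, (Fin (ar p) → Ω.carrier) → Ω.carrier)
    (lI : Λ → ((Mo.M 1).obj Ω.carrier → Ω.carrier)) :
    ∀ n : ℕ, GFormula Θ O ar Λ n → ((Mo.M n).obj PUnit.{u + 1} → Ω.carrier) → Prop
  | const (c : Θ) :
      Evaluates Mo Ω cI pI lI 0 (.const c)
        (Ω.str ∘ (Mo.M 0).map (fun _ => cI c))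
  | prop {n : ℕ} (p : O) (φs : Fin (ar p) → GFormula Θ O ar Λ n)
      (gs : Fin (ar p) → ((Mo.M n).obj PUnit.{u + 1} → Ω.carrier)) :
      (∀ i, Evaluates Mo Ω cI pI lI n (φs i) (gs i)) →
      Evaluates Mo Ω cI pI lI n (.prop p φs) (fun t => pI p (fun i => gs i t))
  | mod {n : ℕ} (L : Λ) (φ : GFormula Θ O ar Λ n)
      (g : (Mo.M n).obj PUnit.{u + 1} → Ω.carrier)
      (h : (Mo.M (n + 1)).obj PUnit.{u + 1} → Ω.carrier) :
      Evaluates Mo Ω cI pI lI n φ g →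
      (h ∘ Mo.mult0 (n + 1) PUnit.{u + 1} = Ω.str ∘ (Mo.M 0).map h) →
      (h ∘ Mo.castM (Nat.add_comm 1 n) PUnit.{u + 1} ∘ Mo.mult 1 n PUnit.{u + 1}
          = lI L ∘ (Mo.M 1).map g) →
      Evaluates Mo Ω cI pI lI (n + 1) (.mod L φ) h

namespace GradedMonad

variable (Mo : GradedMonad.{u})

section Casts

variable {X : Type u}

theorem castM_castM {a b c : ℕ} (h₁ : a = b) (h₂ : b = c) (x : (Mo.M a).obj X) :
    Mo.castM h₂ X (Mo.castM h₁ X x) = Mo.castM (h₁.trans h₂) X x := by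
  subst h₁ h₂; rfl

theorem castM_map {a b : ℕ} (h : a = b) {Y : Type u} (f : X → Y) (x : (Mo.M a).obj X) :
    Mo.castM h Y ((Mo.M a).map f x) = (Mo.M b).map f (Mo.castM h X x) := by
  subst h; rfl

theorem mult_map_castM (k : ℕ) {a b : ℕ} (h : a = b) (t : (Mo.M k).obj ((Mo.M a).obj X)) :
    Mo.mult k b X ((Mo.M k).map (Mo.castM h X) t)
      = Mo.castM (congrArg (k + ·) h) X (Mo.mult k a X t) := by
  subst h
  exact congrArg (Mo.mult k a X) (congrFun ((Mo.M k).map_id _) t)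

theorem mult_castM (m : ℕ) {a b : ℕ} (h : a = b) (t : (Mo.M a).obj ((Mo.M m).obj X)) :
    Mo.mult b m X (Mo.castM h ((Mo.M m).obj X) t)
      = Mo.castM (congrArg (· + m) h) X (Mo.mult a m X t) := by
  subst h; rfl

theorem existsUnique_comp_castM {a b : ℕ} (h : a = b) {C : Type u}
    (P : ((Mo.M a).obj X → C) → Prop) :
    (∃! g : (Mo.M b).obj X → C, P (g ∘ Mo.castM h X)) ↔ ∃! g, P g := by
  subst h; rfl

end Casts

theorem assoc_apply (n k m : ℕ) (X : Type u)
    (t : (Mo.M n).obj ((Mo.M k).obj ((Mo.M m).obj X))) :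
    Mo.mult n (k + m) X ((Mo.M n).map (Mo.mult k m X) t)
      = Mo.castM (Nat.add_assoc n k m) X
          (Mo.mult (n + k) m X (Mo.mult n k ((Mo.M m).obj X) t)) :=
  congrFun (Mo.assoc n k m X) t

theorem mult_nat_apply (n k : ℕ) {X Y : Type u} (f : X → Y)
    (t : (Mo.M n).obj ((Mo.M k).obj X)) :
    (Mo.M (n + k)).map f (Mo.mult n k X t) = Mo.mult n k Y ((Mo.M n).map ((Mo.M k).map f) t) :=
  congrFun (Mo.mult_nat n k f) t

abbrev freeAlg (n : ℕ) (X : Type u) : M0Algebra Mo where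
  carrier := (Mo.M n).obj X
  str := Mo.mult0 n X
  str_unit := Mo.unit_left n X
  str_mult := by
    funext t
    simp only [Function.comp_apply, mult0, (Mo.M 0).map_comp, mult_map_castM, castM_castM,
      assoc_apply]

theorem isM0Hom_freeAlg_comp_castM {a b : ℕ} (h : a = b) (X : Type u) (D : M0Algebra Mo)
    (g : (Mo.M b).obj X → D.carrier) :
    Mo.IsM0Hom (Mo.freeAlg a X) D (g ∘ Mo.castM h X) ↔ Mo.IsM0Hom (Mo.freeAlg b X) D g := by
  subst h; rfl

theorem isM0Hom_str_comp_map (A : M0Algebra Mo) {Y : Type u} (k : Y → A.carrier) :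
    Mo.IsM0Hom (Mo.freeAlg 0 Y) A (A.str ∘ (Mo.M 0).map k) := by
  funext t
  rw [Function.comp_apply, Function.comp_apply, (Mo.M 0).map_comp]
  exact (congrArg A.str (Mo.mult_nat_apply 0 0 k t)).trans (congrFun A.str_mult _).symm

abbrev canonAlg (n : ℕ) (X : Type u) : M1Algebra Mo where
  A0 := Mo.freeAlg n X
  A1 := Mo.freeAlg (n + 1) X
  a10 := Mo.castM (Nat.add_comm 1 n) X ∘ Mo.mult 1 n X
  homomorphy := by
    funext t
    simp only [Function.comp_apply, mult0, mult_castM, castM_castM, (Mo.M 0).map_comp,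
      mult_map_castM, assoc_apply]
  coequalization := by
    funext t
    simp only [Function.comp_apply, mult0, (Mo.M 1).map_comp, mult_map_castM, castM_castM,
      assoc_apply]

variable {Mo}

theorem M1Algebra.isM0Hom_a10_comp_map (B : M1Algebra Mo) {Y : Type u}
    (f : Y → B.A0.carrier) :
    Mo.IsM0Hom (Mo.freeAlg 1 Y) B.A1 (B.a10 ∘ (Mo.M 1).map f) := by
  funext t
  have h := congrFun B.homomorphy ((Mo.M 0).map ((Mo.M 1).map f) t)
  simp only [Function.comp_apply, mult0] at h
  simp only [Function.comp_apply, mult0, ← castM_map, mult_nat_apply, (Mo.M 0).map_comp, h]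

theorem M1Algebra.a10_comp_map_coequalizes (B : M1Algebra Mo) {A : M0Algebra Mo}
    {f : A.carrier → B.A0.carrier} (hf : Mo.IsM0Hom A B.A0 f) :
    (B.a10 ∘ (Mo.M 1).map f) ∘ (Mo.M 1).map A.str
      = (B.a10 ∘ (Mo.M 1).map f) ∘ Mo.mult 1 0 A.carrier := by
  funext t
  calc B.a10 ((Mo.M 1).map f ((Mo.M 1).map A.str t))
      = B.a10 ((Mo.M 1).map B.A0.str ((Mo.M 1).map ((Mo.M 0).map f) t)) := by
        rw [← Function.comp_apply (f := (Mo.M 1).map f), ← (Mo.M 1).map_comp, hf,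
          (Mo.M 1).map_comp, Function.comp_apply]
    _ = B.a10 (Mo.mult 1 0 B.A0.carrier ((Mo.M 1).map ((Mo.M 0).map f) t)) :=
        (congrFun B.coequalization _).symm
    _ = B.a10 ((Mo.M 1).map f (Mo.mult 1 0 A.carrier t)) :=
        congrArg B.a10 (Mo.mult_nat_apply 1 0 f t).symm

theorem canonAlg_isCanonical (hd : Mo.Depth1) (n : ℕ) (X : Type u) :
    (Mo.canonAlg n X).IsCanonical := by
  intro B f hf
  have hcoeq := (hd n X).2 B.A1 (B.a10 ∘ (Mo.M 1).map f) (B.isM0Hom_a10_comp_map f)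
    (B.a10_comp_map_coequalizes hf)
  rw [← Mo.existsUnique_comp_castM (Nat.add_comm 1 n)] at hcoeq
  exact (existsUnique_congr fun g =>
    and_congr (Mo.isM0Hom_freeAlg_comp_castM (Nat.add_comm 1 n) X B.A1 g) Iff.rfl).mp hcoeq

def IsM0Operation (Ω : M0Algebra Mo) {k : ℕ} (q : (Fin k → Ω.carrier) → Ω.carrier) : Prop :=
  q ∘ (fun (t : (Mo.M 0).obj (Fin k → Ω.carrier)) (i : Fin k) =>
      Ω.str ((Mo.M 0).map (fun v => v i) t)) = Ω.str ∘ (Mo.M 0).map q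

theorem IsM0Operation.isM0Hom_comp {A Ω : M0Algebra Mo} {k : ℕ}
    {q : (Fin k → Ω.carrier) → Ω.carrier} (hq : Mo.IsM0Operation Ω q)
    {gs : Fin k → A.carrier → Ω.carrier} (hgs : ∀ i, Mo.IsM0Hom A Ω (gs i)) :
    Mo.IsM0Hom A Ω (fun a => q fun i => gs i a) := by
  funext t
  have hcomp (i : Fin k) : (Mo.M 0).map (gs i) t
      = (Mo.M 0).map (fun v => v i) ((Mo.M 0).map (fun a j => gs j a) t) :=
    congrFun ((Mo.M 0).map_comp (fun a j => gs j a) (fun v => v i)) t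
  calc q (fun i => gs i (A.str t))
      = q (fun i => Ω.str ((Mo.M 0).map (fun v => v i) ((Mo.M 0).map (fun a j => gs j a) t))) :=
        congrArg q (funext fun i => (congrFun (hgs i) t).trans (congrArg Ω.str (hcomp i)))
    _ = Ω.str ((Mo.M 0).map q ((Mo.M 0).map (fun a j => gs j a) t)) := congrFun hq _
    _ = Ω.str ((Mo.M 0).map (fun a => q fun i => gs i a) t) :=
        congrArg Ω.str (congrFun ((Mo.M 0).map_comp (fun a j => gs j a) q) t).symm

end GradedMonad

open GradedMonad

theorem Evaluates.isM0Hom {Mo : GradedMonad.{u}} {Ω : M0Algebra Mo} {Θ O Λ : Type u}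
    {ar : O → ℕ} {cI : Θ → Ω.carrier} {pI : ∀ p : O, (Fin (ar p) → Ω.carrier) → Ω.carrier}
    {lI : Λ → ((Mo.M 1).obj Ω.carrier → Ω.carrier)} (hpI : ∀ p, Mo.IsM0Operation Ω (pI p))
    {n : ℕ} {φ : GFormula Θ O ar Λ n} {g : (Mo.M n).obj PUnit.{u + 1} → Ω.carrier}
    (hev : Evaluates Mo Ω cI pI lI n φ g) :
    Mo.IsM0Hom (Mo.freeAlg n PUnit) Ω g := by
  induction hev with
  | const c => exact Mo.isM0Hom_str_comp_map Ω _
  | prop p _ _ _ ih => exact (hpI p).isM0Hom_comp ih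
  | mod _ _ _ _ _ hhom => exact hhom

namespace GradedLogic

variable (Mo : GradedMonad.{u}) (Ω : M0Algebra Mo) {Θ O Λ : Type u} {ar : O → ℕ}
  (cI : Θ → Ω.carrier) (pI : ∀ p : O, (Fin (ar p) → Ω.carrier) → Ω.carrier)
  (lI : Λ → ((Mo.M 1).obj Ω.carrier → Ω.carrier))

def Depth0Separating : Prop :=
  ∀ s t : (Mo.M 0).obj PUnit.{u + 1},
    (∀ c : Θ, Ω.str ((Mo.M 0).map (fun _ => cI c) s)
        = Ω.str ((Mo.M 0).map (fun _ => cI c) t)) → s = t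

def Depth1Separating : Prop :=
  ∀ A : M1Algebra Mo, A.IsCanonical →
    ∀ 𝔄 : Set (A.A0.carrier → Ω.carrier),
      (∀ f ∈ 𝔄, Mo.IsM0Hom A.A0 Ω f) →
      (∀ s t : A.A0.carrier, (∀ f ∈ 𝔄, f s = f t) → s = t) →
      (∀ (p : O) (fs : Fin (ar p) → (A.A0.carrier → Ω.carrier)),
        (∀ i, fs i ∈ 𝔄) → (fun a => pI p (fun i => fs i a)) ∈ 𝔄) →
      ∀ s t : A.A1.carrier,
        (∀ (L : Λ), ∀ f ∈ 𝔄, ∀ g : A.A1.carrier → Ω.carrier,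
          Mo.IsM0Hom A.A1 Ω g → g ∘ A.a10 = lI L ∘ (Mo.M 1).map f →
          g s = g t) →
        s = t

def Expressive : Prop :=
  ∀ (n : ℕ) (s t : (Mo.M n).obj PUnit.{u + 1}),
    (∀ (φ : GFormula Θ O ar Λ n) (g : (Mo.M n).obj PUnit.{u + 1} → Ω.carrier),
      Evaluates Mo Ω cI pI lI n φ g → g s = g t) →
    s = t

variable {Mo Ω cI pI lI}

theorem expressive_of_separating (hd : Mo.Depth1) (hpI : ∀ p, Mo.IsM0Operation Ω (pI p))
    (h0 : Depth0Separating Mo Ω cI) (h1 : Depth1Separating Mo Ω pI lI) :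
    Expressive Mo Ω cI pI lI := by
  intro n
  induction n with
  | zero => exact fun s t hst => h0 s t fun c => hst (.const c) _ (.const c)
  | succ n ih =>
    intro s t hst
    refine h1 (Mo.canonAlg n PUnit) (canonAlg_isCanonical hd n PUnit)
      {f | ∃ φ, Evaluates Mo Ω cI pI lI n φ f} ?_ ?_ ?_ s t ?_
    · rintro f ⟨φ, hφ⟩
      exact hφ.isM0Hom hpI
    · exact fun s' t' h' => ih s' t' fun φ g hφ => h' g ⟨φ, hφ⟩
    · intro p fs hfs
      choose φs hφs using hfs
      exact ⟨.prop p φs, .prop p φs fs hφs⟩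
    · rintro L f ⟨φ, hφ⟩ g hg hcomm
      exact hst (.mod L φ) g (.mod L φ f g hφ hg hcomm)

theorem Expressive.exists_evaluates_ne (h : Expressive Mo Ω cI pI lI) {n : ℕ}
    {s t : (Mo.M n).obj PUnit.{u + 1}} (hst : s ≠ t) :
    ∃ (φ : GFormula Θ O ar Λ n) (g : (Mo.M n).obj PUnit.{u + 1} → Ω.carrier),
      Evaluates Mo Ω cI pI lI n φ g ∧ g s ≠ g t := by
  by_contra! hsep
  exact hst (h n s t hsep)

end GradedLogic

theorem graded_logic_expressiveness_general
    (Mo : GradedMonad.{u}) (hd : Mo.Depth1)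
    (Ω : M0Algebra Mo) {Θ O Λ : Type u} {ar : O → ℕ}
    (cI : Θ → Ω.carrier)
    (pI : ∀ p : O, (Fin (ar p) → Ω.carrier) → Ω.carrier)
    (lI : Λ → ((Mo.M 1).obj Ω.carrier → Ω.carrier))
    -- each `pI p` is an `M₀`-homomorphism `Ω^{ar p} → Ω`:
    (hpI : ∀ p : O,
      pI p ∘ (fun (t : (Mo.M 0).obj (Fin (ar p) → Ω.carrier)) (i : Fin (ar p)) =>
          Ω.str ((Mo.M 0).map (fun v => v i) t))
        = Ω.str ∘ (Mo.M 0).map (pI p))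
    -- depth-0 separation:
    (h0sep : ∀ s t : (Mo.M 0).obj PUnit.{u + 1},
      (∀ c : Θ, Ω.str ((Mo.M 0).map (fun _ => cI c) s)
          = Ω.str ((Mo.M 0).map (fun _ => cI c) t)) → s = t)
    -- depth-1 separation:
    (h1sep : ∀ A : M1Algebra Mo, A.IsCanonical →
      ∀ 𝔄 : Set (A.A0.carrier → Ω.carrier),
        (∀ f ∈ 𝔄, Mo.IsM0Hom A.A0 Ω f) →
        (∀ s t : A.A0.carrier, (∀ f ∈ 𝔄, f s = f t) → s = t) →
        (∀ (p : O) (fs : Fin (ar p) → (A.A0.carrier → Ω.carrier)),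
          (∀ i, fs i ∈ 𝔄) → (fun a => pI p (fun i => fs i a)) ∈ 𝔄) →
        ∀ s t : A.A1.carrier,
          (∀ (L : Λ), ∀ f ∈ 𝔄, ∀ g : A.A1.carrier → Ω.carrier,
            Mo.IsM0Hom A.A1 Ω g → g ∘ A.a10 = lI L ∘ (Mo.M 1).map f →
            g s = g t) →
          s = t) :
    -- expressiveness: joint injectivity of evaluation maps on `Mₙ1` …
    (∀ (n : ℕ) (s t : (Mo.M n).obj PUnit.{u + 1}),
      (∀ (φ : GFormula Θ O ar Λ n) (g : (Mo.M n).obj PUnit.{u + 1} → Ω.carrier),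
        Evaluates Mo Ω cI pI lI n φ g → g s = g t) →
      s = t) ∧
    -- … and consequently separation of states that are not `α`-trace equivalent
    (∀ (G : SetFunctor.{u}) (α : ∀ X : Type u, G.obj X → (Mo.M 1).obj X),
      (∀ {X Y : Type u} (f : X → Y), (Mo.M 1).map f ∘ α X = α Y ∘ G.map f) →
      ∀ {X Y : Type u} (γ : X → G.obj X) (δ : Y → G.obj Y) (x : X) (y : Y),
        ¬ (∀ n : ℕ, Mo.traceSeq G α γ n x = Mo.traceSeq G α δ n y) →
        ∃ (n : ℕ) (φ : GFormula Θ O ar Λ n)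
          (g : (Mo.M n).obj PUnit.{u + 1} → Ω.carrier),
          Evaluates Mo Ω cI pI lI n φ g ∧
          g (Mo.traceSeq G α γ n x) ≠ g (Mo.traceSeq G α δ n y)) := by
  have hexp := GradedLogic.expressive_of_separating hd hpI h0sep h1sep
  refine ⟨hexp, fun G α _ X Y γ δ x y hne => ?_⟩
  obtain ⟨n, hn⟩ := not_forall.mp hne
  exact ⟨n, hexp.exists_evaluates_ne hn⟩

/-- **Expressiveness of graded logics.** Let `Mo` be a depth-1 graded monad on `Set`
with a graded semantics `α : G → M₁`, and consider a graded logic with truth-value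
`M₀`-algebra `Ω`, truth constants `Θ` (interpreted by `cI`), propositional operators
`O` (interpreted by `M₀`-homomorphisms `Ω^k → Ω`, i.e. `pI` commutes with the
componentwise algebra structure) and modalities `Λ` (interpreted by `M₁`-algebra
structure maps `lI L : M₁Ω → Ω` with carriers `Ω`, `Ω`). If the logic is depth-0
separating and depth-1 separating, then it is expressive: for every `n` the
evaluation maps of depth-`n` formulas are jointly injective on `Mₙ1`, and
consequently any two states of `G`-coalgebras that are not `α`-trace equivalent are
separated by some formula. -/
theorem graded_logic_expressiveness
    (Mo : GradedMonad.{u}) (hd : Mo.Depth1)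
    (Ω : M0Algebra Mo) {Θ O Λ : Type u} {ar : O → ℕ}
    (cI : Θ → Ω.carrier)
    (pI : ∀ p : O, (Fin (ar p) → Ω.carrier) → Ω.carrier)
    (lI : Λ → ((Mo.M 1).obj Ω.carrier → Ω.carrier))
    -- each `pI p` is an `M₀`-homomorphism `Ω^{ar p} → Ω`:
    (hpI : ∀ p : O,
      pI p ∘ (fun (t : (Mo.M 0).obj (Fin (ar p) → Ω.carrier)) (i : Fin (ar p)) =>
          Ω.str ((Mo.M 0).map (fun v => v i) t))
        = Ω.str ∘ (Mo.M 0).map (pI p))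
    -- each `lI L` is the main structure map of an `M₁`-algebra with carriers `Ω`, `Ω`:
    (hlI₁ : ∀ L : Λ, lI L ∘ Mo.mult0 1 Ω.carrier = Ω.str ∘ (Mo.M 0).map (lI L))
    (hlI₂ : ∀ L : Λ, lI L ∘ Mo.mult 1 0 Ω.carrier = lI L ∘ (Mo.M 1).map Ω.str)
    -- depth-0 separation:
    (h0sep : ∀ s t : (Mo.M 0).obj PUnit.{u + 1},
      (∀ c : Θ, Ω.str ((Mo.M 0).map (fun _ => cI c) s)
          = Ω.str ((Mo.M 0).map (fun _ => cI c) t)) → s = t)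
    -- depth-1 separation:
    (h1sep : ∀ A : M1Algebra Mo, A.IsCanonical →
      ∀ 𝔄 : Set (A.A0.carrier → Ω.carrier),
        (∀ f ∈ 𝔄, Mo.IsM0Hom A.A0 Ω f) →
        (∀ s t : A.A0.carrier, (∀ f ∈ 𝔄, f s = f t) → s = t) →
        (∀ (p : O) (fs : Fin (ar p) → (A.A0.carrier → Ω.carrier)),
          (∀ i, fs i ∈ 𝔄) → (fun a => pI p (fun i => fs i a)) ∈ 𝔄) →
        ∀ s t : A.A1.carrier,
          (∀ (L : Λ), ∀ f ∈ 𝔄, ∀ g : A.A1.carrier → Ω.carrier,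
            Mo.IsM0Hom A.A1 Ω g → g ∘ A.a10 = lI L ∘ (Mo.M 1).map f →
            g s = g t) →
          s = t) :
    -- expressiveness: joint injectivity of evaluation maps on `Mₙ1` …
    (∀ (n : ℕ) (s t : (Mo.M n).obj PUnit.{u + 1}),
      (∀ (φ : GFormula Θ O ar Λ n) (g : (Mo.M n).obj PUnit.{u + 1} → Ω.carrier),
        Evaluates Mo Ω cI pI lI n φ g → g s = g t) →
      s = t) ∧
    -- … and consequently separation of states that are not `α`-trace equivalent
    (∀ (G : SetFunctor.{u}) (α : ∀ X : Type u, G.obj X → (Mo.M 1).obj X),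
      (∀ {X Y : Type u} (f : X → Y), (Mo.M 1).map f ∘ α X = α Y ∘ G.map f) →
      ∀ {X Y : Type u} (γ : X → G.obj X) (δ : Y → G.obj Y) (x : X) (y : Y),
        ¬ (∀ n : ℕ, Mo.traceSeq G α γ n x = Mo.traceSeq G α δ n y) →
        ∃ (n : ℕ) (φ : GFormula Θ O ar Λ n)
          (g : (Mo.M n).obj PUnit.{u + 1} → Ω.carrier),
          Evaluates Mo Ω cI pI lI n φ g ∧
          g (Mo.traceSeq G α γ n x) ≠ g (Mo.traceSeq G α δ n y)) :=
  graded_logic_expressiveness_general Mo hd Ω cI pI lI hpI h0sep h1sep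
end

section
/- Let ((M_n)_{n<ω}, η, (μ^{nk})) be a depth-1 graded monad on Set and let A be an M₁-algebra with carriers A₀, A₁ and structure maps a⁰⁰, a⁰¹, a¹⁰. Then A is canonical (free over its 0-part with respect to the 0-part functor U₀) if and only if the diagram M₁M₀A₀ ⇉ M₁A₀ → A₁, with parallel maps μ^{10}_{A₀} and M₁a⁰⁰ and cocone a¹⁰, is a coequalizer diagram in the category of M₀-algebras; moreover this parallel pair is reflexive, with common section M₁η_{A₀}. -/
universe u

open GradedMonad

/-- For a depth-1 graded monad on `Set`, an `M₁`-algebra `A` is canonical iff the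
diagram `M₁M₀A₀ ⇉ M₁A₀ → A₁` (parallel maps `μ^{10}_{A₀}` and `M₁a⁰⁰`, cocone
`a¹⁰`; the fork commutes by the coequalization law of `A`) is a coequalizer in the
category of `M₀`-algebras; moreover this parallel pair is reflexive, with common
section `M₁η_{A₀}`. -/
theorem canonical_iff_coequalizer (Mo : GradedMonad.{u}) (hd : Mo.Depth1)
    (A : M1Algebra Mo) :
    (A.IsCanonical ↔
      ∀ (D : M0Algebra Mo) (h : (Mo.M 1).obj A.A0.carrier → D.carrier),
        (h ∘ Mo.mult0 1 A.A0.carrier = D.str ∘ (Mo.M 0).map h) →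
        (h ∘ Mo.mult 1 0 A.A0.carrier = h ∘ (Mo.M 1).map A.A0.str) →
        ∃! g : A.A1.carrier → D.carrier,
          Mo.IsM0Hom A.A1 D g ∧ g ∘ A.a10 = h) ∧
    (Mo.mult 1 0 A.A0.carrier ∘ (Mo.M 1).map (Mo.unit A.A0.carrier)
        = id) ∧
    ((Mo.M 1).map A.A0.str ∘ (Mo.M 1).map (Mo.unit A.A0.carrier) = id) := by
  constructor
  · constructor
    · -- canonical → coequalizer
      intro hc D h h1 h2
      have hB : M1Algebra Mo := ⟨A.A0, D, h, h1, h2⟩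
      have hidhom : Mo.IsM0Hom A.A0 A.A0 (id : A.A0.carrier → A.A0.carrier) := by
        show (id : A.A0.carrier → A.A0.carrier) ∘ A.A0.str
            = A.A0.str ∘ (Mo.M 0).map id
        rw [(Mo.M 0).map_id]
        rfl
      have := hc ⟨A.A0, D, h, h1, h2⟩ id hidhom
      simpa [(Mo.M 1).map_id] using this
    · -- coequalizer → canonical
      intro hcoeq B f hf
      have cast1 : ∀ X : Type u, Mo.mult0 1 X = Mo.mult 0 1 X := by
        intro X
        funext x
        show Mo.castM (Nat.zero_add 1) X (Mo.mult 0 1 X x) = Mo.mult 0 1 X x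
        exact eq_of_heq (cast_heq _ _)
      have nat01 : (Mo.M 1).map f ∘ Mo.mult 0 1 A.A0.carrier
          = Mo.mult 0 1 B.A0.carrier ∘ (Mo.M 0).map ((Mo.M 1).map f) :=
        Mo.mult_nat 0 1 f
      have nat10 : (Mo.M 1).map f ∘ Mo.mult 1 0 A.A0.carrier
          = Mo.mult 1 0 B.A0.carrier ∘ (Mo.M 1).map ((Mo.M 0).map f) :=
        Mo.mult_nat 1 0 f
      set h := B.a10 ∘ (Mo.M 1).map f with hh
      have c1 : h ∘ Mo.mult0 1 A.A0.carrier = B.A1.str ∘ (Mo.M 0).map h := by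
        calc h ∘ Mo.mult0 1 A.A0.carrier
            = B.a10 ∘ ((Mo.M 1).map f ∘ Mo.mult 0 1 A.A0.carrier) := by
              rw [hh, cast1]; rfl
          _ = (B.a10 ∘ Mo.mult0 1 B.A0.carrier) ∘ (Mo.M 0).map ((Mo.M 1).map f) := by
              rw [nat01, cast1]; rfl
          _ = (B.A1.str ∘ (Mo.M 0).map B.a10) ∘ (Mo.M 0).map ((Mo.M 1).map f) := by
              rw [B.homomorphy]
          _ = B.A1.str ∘ (Mo.M 0).map h := by
              rw [hh, (Mo.M 0).map_comp]; rfl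
      have c2 : h ∘ Mo.mult 1 0 A.A0.carrier = h ∘ (Mo.M 1).map A.A0.str := by
        calc h ∘ Mo.mult 1 0 A.A0.carrier
            = (B.a10 ∘ Mo.mult 1 0 B.A0.carrier) ∘ (Mo.M 1).map ((Mo.M 0).map f) := by
              rw [hh]
              show B.a10 ∘ ((Mo.M 1).map f ∘ Mo.mult 1 0 A.A0.carrier) = _
              rw [nat10]; rfl
          _ = (B.a10 ∘ (Mo.M 1).map B.A0.str) ∘ (Mo.M 1).map ((Mo.M 0).map f) := by
              rw [B.coequalization]
          _ = B.a10 ∘ (Mo.M 1).map (B.A0.str ∘ (Mo.M 0).map f) := by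
              rw [(Mo.M 1).map_comp]; rfl
          _ = B.a10 ∘ (Mo.M 1).map (f ∘ A.A0.str) := by
              rw [← hf]
          _ = h ∘ (Mo.M 1).map A.A0.str := by
              rw [(Mo.M 1).map_comp, hh]; rfl
      exact hcoeq B.A1 h c1 c2
  · refine ⟨Mo.unit_right 1 A.A0.carrier, ?_⟩
    rw [← (Mo.M 1).map_comp, A.A0.str_unit, (Mo.M 1).map_id]
end

section
/- Let x and y be states of finitely branching LTSs over a finite action set 𝒜. Then RT(x) = RT(y) if and only if RT'(x) = RT'(y); that is, ready trace equivalence coincides with the equivalence defined by the sets RT'. -/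
universe u v

/-- The ready set `I(x)` of a state. -/
def readySet {A : Type u} {X : Type v} [DecidableEq A]
    (γ : X → Finset (A × X)) (x : X) : Finset A :=
  (γ x).image Prod.fst

/-- `ReadyPath γ x l z` : there is a path from `x` to `z` along transitions
`x = x₀ →σ₁ x₁ →σ₂ ⋯ →σₙ xₙ = z` such that `l` is the list of pairs
`(I(x₀), σ₁), …, (I(x_{n-1}), σₙ)` recording the ready set of each source state. -/
inductive ReadyPath {A : Type u} {X : Type v} [DecidableEq A] (γ : X → Finset (A × X)) :
    X → List (Finset A × A) → X → Prop
  | nil (x : X) : ReadyPath γ x [] x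
  | cons {x : X} {σ : A} {y : X} {l : List (Finset A × A)} {z : X} :
      (σ, y) ∈ γ x → ReadyPath γ y l z → ReadyPath γ x ((readySet γ x, σ) :: l) z

/-- The set `RT(x)` of ready traces of `x`. -/
def RT {A : Type u} {X : Type v} [DecidableEq A] (γ : X → Finset (A × X)) (x : X) :
    Set (List (Finset A × A) × Finset A) :=
  {p | ∃ z, ReadyPath γ x p.1 z ∧ p.2 = readySet γ z}

/-- The modified ready trace data `RT'(x)`: `Sum.inl l` records a ready-annotated
path (annotating source states), and `Sum.inr l` additionally records that the path
ends in a deadlock (the `⋆`-marker). -/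
def RT' {A : Type u} {X : Type v} [DecidableEq A] (γ : X → Finset (A × X)) (x : X) :
    Set (List (Finset A × A) ⊕ List (Finset A × A)) :=
  {p | (∃ l, (∃ z, ReadyPath γ x l z) ∧ p = Sum.inl l) ∨
       (∃ l, (∃ z, ReadyPath γ x l z ∧ readySet γ z = ∅) ∧ p = Sum.inr l)}

lemma ReadyPath.snoc {A : Type u} {X : Type v} [DecidableEq A] {γ : X → Finset (A × X)}
    {x z w : X} {l : List (Finset A × A)} {σ : A}
    (h : ReadyPath γ x l z) (hw : (σ, w) ∈ γ z) :
    ReadyPath γ x (l ++ [(readySet γ z, σ)]) w := by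
  induction h with
  | nil x => exact ReadyPath.cons hw (ReadyPath.nil w)
  | cons h1 h2 ih => exact ReadyPath.cons h1 (ih hw)

lemma ReadyPath.snoc_inv {A : Type u} {X : Type v} [DecidableEq A] {γ : X → Finset (A × X)}
    {x w : X} {l : List (Finset A × A)} {B : Finset A} {σ : A}
    (h : ReadyPath γ x (l ++ [(B, σ)]) w) :
    ∃ z, ReadyPath γ x l z ∧ readySet γ z = B ∧ σ ∈ readySet γ z := by
  induction l generalizing x with
  | nil =>
    cases h with
    | cons h1 h2 =>
      refine ⟨x, ReadyPath.nil x, rfl, ?_⟩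
      exact Finset.mem_image.2 ⟨(σ, _), h1, rfl⟩
  | cons p l ih =>
    cases h with
    | cons h1 h2 =>
      obtain ⟨z, hz, hB, hσ⟩ := ih h2
      exact ⟨z, ReadyPath.cons h1 hz, hB, hσ⟩

lemma mem_inl_RT' {A : Type u} {X : Type v} [DecidableEq A] (γ : X → Finset (A × X)) (x : X)
    (l : List (Finset A × A)) :
    Sum.inl l ∈ RT' γ x ↔ ∃ B, (l, B) ∈ RT γ x := by
  constructor
  · rintro (⟨l', ⟨z, hz⟩, hl⟩ | ⟨l', _, hl⟩)
    · cases hl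
      exact ⟨readySet γ z, z, hz, rfl⟩
    · cases hl
  · rintro ⟨B, z, hz, _⟩
    exact Or.inl ⟨l, ⟨z, hz⟩, rfl⟩

lemma mem_inr_RT' {A : Type u} {X : Type v} [DecidableEq A] (γ : X → Finset (A × X)) (x : X)
    (l : List (Finset A × A)) :
    Sum.inr l ∈ RT' γ x ↔ (l, (∅ : Finset A)) ∈ RT γ x := by
  constructor
  · rintro (⟨l', _, hl⟩ | ⟨l', ⟨z, hz, he⟩, hl⟩)
    · cases hl
    · cases hl
      exact ⟨z, hz, he.symm⟩
  · rintro ⟨z, hz, he⟩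
    exact Or.inr ⟨l, ⟨z, hz, he.symm⟩, rfl⟩

lemma mem_RT_iff {A : Type u} {X : Type v} [DecidableEq A] (γ : X → Finset (A × X)) (x : X)
    (l : List (Finset A × A)) (B : Finset A) :
    (l, B) ∈ RT γ x ↔
      (B = ∅ ∧ Sum.inr l ∈ RT' γ x) ∨
      (∃ σ ∈ B, Sum.inl (l ++ [(B, σ)]) ∈ RT' γ x) := by
  constructor
  · rintro ⟨z, hz, hB⟩
    have hz' : ReadyPath γ x l z := hz
    have hB' : B = readySet γ z := hB
    rcases B.eq_empty_or_nonempty with he | ⟨σ, hσ⟩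
    · exact Or.inl ⟨he, (mem_inr_RT' γ x l).2 ⟨z, hz', by rw [← hB', he]⟩⟩
    · refine Or.inr ⟨σ, hσ, ?_⟩
      have hσ' : σ ∈ readySet γ z := hB' ▸ hσ
      obtain ⟨⟨σ', w⟩, hw, hfst⟩ := Finset.mem_image.1 hσ'
      cases hfst
      refine Or.inl ⟨_, ⟨w, ?_⟩, rfl⟩
      rw [hB']
      exact ReadyPath.snoc hz' hw
  · rintro (⟨hB, hr⟩ | ⟨σ, hσ, hr⟩)
    · exact hB ▸ (mem_inr_RT' γ x l).1 hr
    · obtain ⟨B', w, hw, -⟩ := (mem_inl_RT' γ x _).1 hr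
      obtain ⟨z, hz, hBz, _⟩ := ReadyPath.snoc_inv hw
      exact ⟨z, hz, hBz.symm⟩

/-- Ready trace equivalence coincides with the equivalence defined by the sets `RT'`. -/
theorem readyTrace_equiv_iff_RT' {A : Type u} [Fintype A] [DecidableEq A]
    {X Y : Type v} (γ : X → Finset (A × X)) (δ : Y → Finset (A × Y)) (x : X) (y : Y) :
    RT γ x = RT δ y ↔ RT' γ x = RT' δ y := by
  constructor
  · intro h
    ext p
    cases p with
    | inl l => rw [mem_inl_RT', mem_inl_RT', h]
    | inr l => rw [mem_inr_RT', mem_inr_RT', h]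
  · intro h
    ext ⟨l, B⟩
    rw [mem_RT_iff, mem_RT_iff, h]
end

section
/- Let x and y be states of finitely branching LTSs over a finite action set 𝒜. Then FT(x) = FT(y) if and only if FT'(x) = FT'(y); that is, failure trace equivalence coincides with the equivalence defined by the sets FT'. -/
universe u v

/-- `FailurePath γ x l z` : there is a path from `x` to `z` along transitions
`x = x₀ →σ₁ x₁ →σ₂ ⋯ →σₙ xₙ = z` such that `l` is a list of pairs
`(A₁, σ₁), …, (Aₙ, σₙ)` with `Aᵢ ∩ I(x_{i-1}) = ∅` (failure sets of source states). -/
inductive FailurePath {A : Type u} {X : Type v} [DecidableEq A] (γ : X → Finset (A × X)) :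
    X → List (Finset A × A) → X → Prop
  | nil (x : X) : FailurePath γ x [] x
  | cons {x : X} {σ : A} {y : X} {l : List (Finset A × A)} {z : X} (B : Finset A) :
      B ∩ readySet γ x = ∅ → (σ, y) ∈ γ x → FailurePath γ y l z →
      FailurePath γ x ((B, σ) :: l) z

/-- The set `FT(x)` of failure traces of `x`. -/
def FT {A : Type u} {X : Type v} [DecidableEq A] (γ : X → Finset (A × X)) (x : X) :
    Set (List (Finset A × A) × Finset A) :=
  {p | ∃ z, FailurePath γ x p.1 z ∧ p.2 ∩ readySet γ z = ∅}

/-- The modified failure trace data `FT'(x)`: `Sum.inl l` records a failure-annotated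
path (annotating source states), and `Sum.inr l` additionally records that the path
ends in a deadlock (the `⋆`-marker). -/
def FT' {A : Type u} {X : Type v} [DecidableEq A] (γ : X → Finset (A × X)) (x : X) :
    Set (List (Finset A × A) ⊕ List (Finset A × A)) :=
  {p | (∃ l, (∃ z, FailurePath γ x l z) ∧ p = Sum.inl l) ∨
       (∃ l, (∃ z, FailurePath γ x l z ∧ readySet γ z = ∅) ∧ p = Sum.inr l)}

lemma failurePath_append_single {A : Type u} {X : Type v} [DecidableEq A]
    (γ : X → Finset (A × X)) (x : X) (l : List (Finset A × A)) (B : Finset A) (σ : A)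
    (w : X) :
    FailurePath γ x (l ++ [(B, σ)]) w ↔
      ∃ z, FailurePath γ x l z ∧ B ∩ readySet γ z = ∅ ∧ (σ, w) ∈ γ z := by
  induction l generalizing x with
  | nil =>
    simp only [List.nil_append]
    constructor
    · rintro h
      cases h with
      | cons B hB hmem hrest =>
        cases hrest
        exact ⟨x, FailurePath.nil x, hB, hmem⟩
    · rintro ⟨z, hz, hB, hmem⟩
      cases hz
      exact FailurePath.cons B hB hmem (FailurePath.nil w)
  | cons a l ih =>
    constructor
    · rintro h
      cases h with
      | cons B' hB hmem hrest =>
        obtain ⟨z, hz, h1, h2⟩ := (ih _).mp hrest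
        exact ⟨z, FailurePath.cons _ hB hmem hz, h1, h2⟩
    · rintro ⟨z, hz, h1, h2⟩
      cases hz with
      | cons B' hB hmem hrest =>
        exact FailurePath.cons _ hB hmem ((ih _).mpr ⟨z, hrest, h1, h2⟩)

lemma inl_mem_FT'_iff {A : Type u} {X : Type v} [DecidableEq A]
    (γ : X → Finset (A × X)) (x : X) (l : List (Finset A × A)) :
    Sum.inl l ∈ FT' γ x ↔ (l, (∅ : Finset A)) ∈ FT γ x := by
  constructor
  · rintro (⟨l', ⟨z, hz⟩, heq⟩ | ⟨l', _, heq⟩)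
    · cases heq
      exact ⟨z, hz, Finset.empty_inter _⟩
    · exact absurd heq (by simp)
  · rintro ⟨z, hz, -⟩
    exact Or.inl ⟨l, ⟨z, hz⟩, rfl⟩

lemma inr_mem_FT'_iff {A : Type u} {X : Type v} [Fintype A] [DecidableEq A]
    (γ : X → Finset (A × X)) (x : X) (l : List (Finset A × A)) :
    Sum.inr l ∈ FT' γ x ↔ (l, (Finset.univ : Finset A)) ∈ FT γ x := by
  constructor
  · rintro (⟨l', _, heq⟩ | ⟨l', ⟨z, hz, hdead⟩, heq⟩)
    · exact absurd heq (by simp)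
    · cases heq
      exact ⟨z, hz, by simp [hdead]⟩
  · rintro ⟨z, hz, hB⟩
    refine Or.inr ⟨l, ⟨z, hz, ?_⟩, rfl⟩
    simpa using hB
  
lemma mem_FT_iff {A : Type u} {X : Type v} [DecidableEq A]
    (γ : X → Finset (A × X)) (x : X) (l : List (Finset A × A)) (B : Finset A) :
    (l, B) ∈ FT γ x ↔
      Sum.inr l ∈ FT' γ x ∨ ∃ σ : A, Sum.inl (l ++ [(B, σ)]) ∈ FT' γ x := by
  constructor
  · rintro ⟨z, hz, hB⟩
    by_cases h : readySet γ z = ∅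
    · exact Or.inl (Or.inr ⟨l, ⟨z, hz, h⟩, rfl⟩)
    · obtain ⟨σ, hσ⟩ := Finset.nonempty_iff_ne_empty.mpr h
      obtain ⟨⟨σ', w⟩, hmem, rfl⟩ := Finset.mem_image.mp hσ
      refine Or.inr ⟨σ', Or.inl ⟨l ++ [(B, σ')], ⟨w, ?_⟩, rfl⟩⟩
      exact (failurePath_append_single γ x l B σ' w).mpr ⟨z, hz, hB, hmem⟩
  · rintro (h | ⟨σ, h⟩)
    · rcases h with ⟨l', _, heq⟩ | ⟨l', ⟨z, hz, hdead⟩, heq⟩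
      · exact absurd heq (by simp)
      · cases heq
        exact ⟨z, hz, by simp [hdead]⟩
    · rcases h with ⟨l', ⟨w, hw⟩, heq⟩ | ⟨l', _, heq⟩
      · cases heq
        obtain ⟨z, hz, hB, -⟩ := (failurePath_append_single γ x l B σ w).mp hw
        exact ⟨z, hz, hB⟩
      · exact absurd heq (by simp)

/-- Failure trace equivalence coincides with the equivalence defined by the sets `FT'`. -/
theorem failureTrace_equiv_iff_FT' {A : Type u} [Fintype A] [DecidableEq A]
    {X Y : Type v} (γ : X → Finset (A × X)) (δ : Y → Finset (A × Y)) (x : X) (y : Y) :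
    FT γ x = FT δ y ↔ FT' γ x = FT' δ y := by
  constructor
  · intro h
    ext p
    cases p with
    | inl l => rw [inl_mem_FT'_iff, inl_mem_FT'_iff, h]
    | inr l => rw [inr_mem_FT'_iff, inr_mem_FT'_iff, h]
  · intro h
    ext ⟨l, B⟩
    rw [mem_FT_iff, mem_FT_iff, h]
end
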